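/- Let d ≥ 1, n ≥ 2, and let A : [n]^d → ℝ. Define A' : [n−1]^d → ℝ by A'[i] = Σ_{j ∈ B_d} (−1)^{‖j‖₁} · A[i + j]. Then the maximum over i ∈ [n−1]^d and integers Δ ≥ 0 with i_r + Δ ≤ n−1 for all r of the hypercube sum Σ_{k : i_r ≤ k_r ≤ i_r+Δ for all r} A'[k] equals the maximum over i ∈ [n−1]^d and integers Δ ≥ 1 with i_r + Δ ≤ n for all r of Σ_{j ∈ B_d} (−1)^{‖j‖₁} · A[i + Δ·j]. -/

import Mathlib

/-!
Write `A' = ∂A` for the mixed first difference, `∂A k = ∑ⱼ (-1)^|j| A (k + j)`. Summed over a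
cube of side `Δ + 1`, it telescopes in every coordinate separately, leaving the signed sum of `A`
over the `2^d` corners of the cube with side `Δ + 1`. Hence every value in the first set is a
combination value and conversely, so the two sets, and their suprema, coincide.
-/

open Finset

section CornerSum

variable {ι R : Type*} [Fintype ι] [DecidableEq ι] [CommRing R]

def cornerSum (A : (ι → ℕ) → R) (i : ι → ℕ) (Δ : ℕ) : R :=
  ∑ j : ι → Fin 2, (-1) ^ (∑ r, (j r : ℕ)) * A (fun r => i r + Δ * (j r : ℕ))

theorem sum_neg_one_pow_mul_prod (f : ι → Fin 2 → R) :
    ∑ j : ι → Fin 2, (-1 : R) ^ (∑ r, (j r : ℕ)) * ∏ r, f r (j r) = ∏ r, (f r 0 - f r 1) := by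
  have h : ∀ r, f r 0 - f r 1 = ∑ x : Fin 2, (-1 : R) ^ (x : ℕ) * f r x := fun r => by
    simp [Fin.sum_univ_two, sub_eq_add_neg]
  simp only [h, Fintype.prod_sum, prod_mul_distrib, prod_pow_eq_pow_sum]

theorem boole_Icc_sub_boole_Icc_succ (i Δ m : ℕ) :
    ((if i ≤ m ∧ m ≤ i + Δ then 1 else 0) - if i + 1 ≤ m ∧ m ≤ i + Δ + 1 then 1 else 0 : R) =
      (if m = i then 1 else 0) - if m = i + (Δ + 1) then 1 else 0 := by
  split_ifs <;> first | omega | simp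

theorem sum_neg_one_pow_mul_boole_Icc (i m : ι → ℕ) (Δ : ℕ) :
    ∑ j : ι → Fin 2, (-1 : R) ^ (∑ r, (j r : ℕ)) *
        (if ∀ r, i r + j r ≤ m r ∧ m r ≤ i r + Δ + j r then 1 else 0) =
      ∑ j : ι → Fin 2, (-1 : R) ^ (∑ r, (j r : ℕ)) *
        (if ∀ r, m r = i r + (Δ + 1) * j r then 1 else 0) := by
  simp only [← Fintype.prod_boole,
    sum_neg_one_pow_mul_prod fun r (x : Fin 2) =>
      if i r + (x : ℕ) ≤ m r ∧ m r ≤ i r + Δ + x then (1 : R) else 0,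
    sum_neg_one_pow_mul_prod fun r (x : Fin 2) => if m r = i r + (Δ + 1) * x then (1 : R) else 0]
  refine prod_congr rfl fun r _ => ?_
  simpa using boole_Icc_sub_boole_Icc_succ (i r) Δ (m r)

theorem sum_Icc_shift_eq_sum_boole_mul (A : (ι → ℕ) → R) (i : ι → ℕ) (Δ : ℕ) (j : ι → Fin 2) :
    ∑ k ∈ Icc i (fun r => i r + Δ), A (fun r => k r + j r) =
      ∑ m ∈ Icc i (fun r => i r + Δ + 1),
        (if ∀ r, i r + j r ≤ m r ∧ m r ≤ i r + Δ + j r then 1 else 0) * A m := by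
  let c : ι → ℕ := fun r => j r
  have hsub : Icc (i + c) ((fun r => i r + Δ) + c) ⊆ Icc i (fun r => i r + Δ + 1) :=
    fun m hm => by
      simp only [mem_Icc, Pi.le_def, Pi.add_apply, c] at hm ⊢
      exact ⟨fun r => (hm.1 r).trans' (Nat.le_add_right _ _),
        fun r => (hm.2 r).trans (by have := (j r).is_le; omega)⟩
  have hshift : ∑ k ∈ Icc i (fun r => i r + Δ), A (fun r => k r + j r) =
      ∑ m ∈ Icc (i + c) ((fun r => i r + Δ) + c), A m := by
    rw [← map_add_right_Icc, sum_map]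
    rfl
  rw [hshift, ← inter_eq_right.mpr hsub, ← sum_ite_mem]
  refine sum_congr rfl fun m _ => ?_
  simp [c, Pi.le_def, forall_and, ite_mul]

theorem apply_corner_eq_sum_boole_mul (A : (ι → ℕ) → R) (i : ι → ℕ) (Δ : ℕ) (j : ι → Fin 2) :
    A (fun r => i r + (Δ + 1) * j r) =
      ∑ m ∈ Icc i (fun r => i r + Δ + 1),
        (if ∀ r, m r = i r + (Δ + 1) * j r then 1 else 0) * A m := by
  have hmem : (fun r => i r + (Δ + 1) * j r) ∈ Icc i (fun r => i r + Δ + 1) := by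
    simp only [mem_Icc, Pi.le_def]
    exact ⟨fun r => Nat.le_add_right _ _,
      fun r => by have := Nat.mul_le_mul_left (Δ + 1) (j r).is_le; omega⟩
  simp only [← funext_iff, ite_mul, one_mul, zero_mul, sum_ite_eq', if_pos hmem]

/-- Discrete fundamental theorem of calculus for the mixed first difference `cornerSum A · 1`. -/
theorem sum_Icc_cornerSum_one (A : (ι → ℕ) → R) (i : ι → ℕ) (Δ : ℕ) :
    ∑ k ∈ Icc i (fun r => i r + Δ), cornerSum A k 1 = cornerSum A i (Δ + 1) := by
  -- Both sides are `∑ m ∈ B, w m * A m`, with weights that agree by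
  -- `sum_neg_one_pow_mul_boole_Icc`.
  have swap : ∀ w : (ι → Fin 2) → (ι → ℕ) → R,
      ∑ j : ι → Fin 2, (-1 : R) ^ (∑ r, (j r : ℕ)) *
          ∑ m ∈ Icc i (fun r => i r + Δ + 1), w j m * A m =
        ∑ m ∈ Icc i (fun r => i r + Δ + 1),
          (∑ j : ι → Fin 2, (-1 : R) ^ (∑ r, (j r : ℕ)) * w j m) * A m := fun w => by
    simp only [mul_sum, sum_mul, mul_assoc]
    exact sum_comm
  calc ∑ k ∈ Icc i (fun r => i r + Δ), cornerSum A k 1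
      = ∑ j : ι → Fin 2, (-1 : R) ^ (∑ r, (j r : ℕ)) *
          ∑ k ∈ Icc i (fun r => i r + Δ), A (fun r => k r + j r) := by
        simp only [cornerSum, one_mul, mul_sum]
        exact sum_comm
    _ = cornerSum A i (Δ + 1) := by
        simp only [sum_Icc_shift_eq_sum_boole_mul, swap, sum_neg_one_pow_mul_boole_Icc, ← swap,
          ← apply_corner_eq_sum_boole_mul, cornerSum]

end CornerSum

theorem stmt_12_general (d n : ℕ)
    (A A' : (Fin d → ℕ) → ℝ)
    (hA' : ∀ i : Fin d → ℕ, (∀ r, 1 ≤ i r ∧ i r ≤ n - 1) →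
      A' i = ∑ j : Fin d → Fin 2, (-1 : ℝ) ^ (∑ r, (j r).val) *
        A (fun r => i r + (j r).val)) :
    sSup {x : ℝ | ∃ (i : Fin d → ℕ) (Δ : ℕ),
        (∀ r, 1 ≤ i r ∧ i r ≤ n - 1) ∧ (∀ r, i r + Δ ≤ n - 1) ∧
        x = ∑ k ∈ Finset.Icc i (fun r => i r + Δ), A' k}
      = sSup {x : ℝ | ∃ (i : Fin d → ℕ) (Δ : ℕ),
          (∀ r, 1 ≤ i r ∧ i r ≤ n - 1) ∧ 1 ≤ Δ ∧ (∀ r, i r + Δ ≤ n) ∧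
          x = ∑ j : Fin d → Fin 2, (-1 : ℝ) ^ (∑ r, (j r).val) *
                A (fun r => i r + Δ * (j r).val)} := by
  have cube_sum : ∀ (i : Fin d → ℕ) (Δ : ℕ), (∀ r, 1 ≤ i r ∧ i r ≤ n - 1) →
      (∀ r, i r + Δ ≤ n - 1) →
      ∑ k ∈ Icc i (fun r => i r + Δ), A' k = cornerSum A i (Δ + 1) := by
    intro i Δ hi hΔ
    rw [← sum_Icc_cornerSum_one]
    refine sum_congr rfl fun k hk => ?_
    simp only [mem_Icc, Pi.le_def] at hk
    simp only [hA' k fun r => ⟨(hi r).1.trans (hk.1 r), (hk.2 r).trans (hΔ r)⟩, cornerSum,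
      one_mul]
  congr 1
  ext x
  constructor
  · rintro ⟨i, Δ, hi, hΔ, rfl⟩
    exact ⟨i, Δ + 1, hi, Nat.le_add_left _ _, fun r => by have := hΔ r; have := hi r; omega,
      cube_sum i Δ hi hΔ⟩
  · rintro ⟨i, Δ, hi, hΔ₁, hΔ, rfl⟩
    obtain ⟨Δ, rfl⟩ := Nat.exists_eq_add_of_le' hΔ₁
    exact ⟨i, Δ, hi, fun r => by have := hΔ r; omega, (cube_sum i Δ hi fun r => by
      have := hΔ r; omega).symm⟩

theorem stmt_12 (d n : ℕ) (hd : 1 ≤ d) (hn : 2 ≤ n)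
    (A A' : (Fin d → ℕ) → ℝ)
    (hA' : ∀ i : Fin d → ℕ, (∀ r, 1 ≤ i r ∧ i r ≤ n - 1) →
      A' i = ∑ j : Fin d → Fin 2, (-1 : ℝ) ^ (∑ r, (j r).val) *
        A (fun r => i r + (j r).val)) :
    sSup {x : ℝ | ∃ (i : Fin d → ℕ) (Δ : ℕ),
        (∀ r, 1 ≤ i r ∧ i r ≤ n - 1) ∧ (∀ r, i r + Δ ≤ n - 1) ∧
        x = ∑ k ∈ Finset.Icc i (fun r => i r + Δ), A' k}
      = sSup {x : ℝ | ∃ (i : Fin d → ℕ) (Δ : ℕ),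
          (∀ r, 1 ≤ i r ∧ i r ≤ n - 1) ∧ 1 ≤ Δ ∧ (∀ r, i r + Δ ≤ n) ∧
          x = ∑ j : Fin d → Fin 2, (-1 : ℝ) ^ (∑ r, (j r).val) *
                A (fun r => i r + Δ * (j r).val)} :=
  stmt_12_general d n A A' hA'
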